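/- Any two full segments of a finite sequence of nonnegative real numbers are either disjoint or comparable by inclusion. -/

import Mathlib

/- If `[i,j]` and `[i',j']` cross, say `i < i' ≤ j < j'`, then `[i,j']` properly contains both,
and its minimum is at least the smaller of their two minima. Both being full then forces
each minimum to exceed that smaller one, which is absurd. -/

/-- Minimum of the values `l i, ..., l j` (real-valued sequence). -/
noncomputable def segMin (l : ℕ → ℝ) (i j : ℕ) : ℝ :=
  (Finset.Icc i j).fold min (l i) l

/-- Neighborhood maximin parameter `m[i,j]`: the maximum of `min(l h, ..., l k)` over
subintervals `[h,k]` of `[1,n]` properly containing `[i,j]`, with value `0` if there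
are none (in particular for `[i,j] = [1,n]`). -/
noncomputable def nmaxim (l : ℕ → ℝ) (n i j : ℕ) : ℝ :=
  (((Finset.Icc 1 i) ×ˢ (Finset.Icc j n)).filter (fun p => p ≠ (i, j))).fold max 0
    (fun p => segMin l p.1 p.2)

/-- `[i,j]` is a full segment (island) of the sequence `l` restricted to `[1,n]`. -/
def IsFullSeg (l : ℕ → ℝ) (n i j : ℕ) : Prop :=
  1 ≤ i ∧ i ≤ j ∧ j ≤ n ∧ nmaxim l n i j < segMin l i j

section segMin

variable (l : ℕ → ℝ)

lemma segMin_le_left (i j : ℕ) : segMin l i j ≤ l i :=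
  (Finset.fold_min_le _).mpr (Or.inl le_rfl)

lemma segMin_le {i j k : ℕ} (hk : k ∈ Finset.Icc i j) : segMin l i j ≤ l k :=
  (Finset.fold_min_le _).mpr (Or.inr ⟨k, hk, le_rfl⟩)

lemma le_segMin {i j : ℕ} {c : ℝ} (h : ∀ k ∈ Finset.Icc i j, c ≤ l k) (hi : c ≤ l i) :
    c ≤ segMin l i j :=
  (Finset.le_fold_min _).mpr ⟨hi, h⟩

lemma min_segMin_le_segMin {i j i' j' : ℕ} (hi' : i' ≤ j + 1) :
    min (segMin l i j) (segMin l i' j') ≤ segMin l i j' := by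
  refine le_segMin l (fun k hk ↦ ?_) ((min_le_left _ _).trans (segMin_le_left l i j))
  rw [Finset.mem_Icc] at hk
  rcases le_or_gt k j with hkj | hjk
  · exact (min_le_left _ _).trans (segMin_le l (Finset.mem_Icc.mpr ⟨hk.1, hkj⟩))
  · exact (min_le_right _ _).trans (segMin_le l (Finset.mem_Icc.mpr ⟨by omega, hk.2⟩))

lemma segMin_le_nmaxim {n i j h k : ℕ} (hh : 1 ≤ h) (hhi : h ≤ i) (hjk : j ≤ k) (hkn : k ≤ n)
    (hne : (h, k) ≠ (i, j)) : segMin l h k ≤ nmaxim l n i j :=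
  (Finset.le_fold_max _).mpr
    (Or.inr ⟨(h, k), by simp [Finset.mem_product, hh, hhi, hjk, hkn, hne], le_rfl⟩)

end segMin

lemma IsFullSeg.not_crossing {l : ℕ → ℝ} {n i j i' j' : ℕ} (h : IsFullSeg l n i j)
    (h' : IsFullSeg l n i' j') (hii' : i < i') (hi'j : i' ≤ j) (hjj' : j < j') : False := by
  have hunion : min (segMin l i j) (segMin l i' j') ≤ segMin l i j' :=
    min_segMin_le_segMin l (by omega)
  have hm : segMin l i j' ≤ nmaxim l n i j :=
    segMin_le_nmaxim l h.1 le_rfl hjj'.le h'.2.2.1 (by simp only [ne_eq, Prod.mk.injEq]; omega)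
  have hm' : segMin l i j' ≤ nmaxim l n i' j' :=
    segMin_le_nmaxim l h.1 hii'.le le_rfl h'.2.2.1 (by simp only [ne_eq, Prod.mk.injEq]; omega)
  exact lt_irrefl _ <|
    lt_min (hunion.trans hm |>.trans_lt h.2.2.2) (hunion.trans hm' |>.trans_lt h'.2.2.2)

theorem full_segments_disjoint_or_nested_general (l : ℕ → ℝ) (n : ℕ)
    (i j i' j' : ℕ) (h : IsFullSeg l n i j) (h' : IsFullSeg l n i' j') :
    (Finset.Icc i j ∩ Finset.Icc i' j' = ∅) ∨
      Finset.Icc i j ⊆ Finset.Icc i' j' ∨ Finset.Icc i' j' ⊆ Finset.Icc i j := by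
  by_contra! hcross
  obtain ⟨⟨k, hk⟩, hnsub, hnsub'⟩ := hcross
  rw [Finset.mem_inter, Finset.mem_Icc, Finset.mem_Icc] at hk
  rw [Finset.Icc_subset_Icc_iff h.2.1] at hnsub
  rw [Finset.Icc_subset_Icc_iff h'.2.1] at hnsub'
  obtain hii' | hi'i := lt_or_ge i i'
  · exact h.not_crossing h' hii' (by omega) (by omega)
  · exact h'.not_crossing h (by omega) (by omega) (by omega)

/-- Any two full segments of a finite sequence of nonnegative reals are disjoint or nested. -/
theorem full_segments_disjoint_or_nested (l : ℕ → ℝ) (n : ℕ)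
    (hnonneg : ∀ k ∈ Finset.Icc 1 n, 0 ≤ l k)
    (i j i' j' : ℕ) (h : IsFullSeg l n i j) (h' : IsFullSeg l n i' j') :
    (Finset.Icc i j ∩ Finset.Icc i' j' = ∅) ∨
      Finset.Icc i j ⊆ Finset.Icc i' j' ∨ Finset.Icc i' j' ⊆ Finset.Icc i j :=
  full_segments_disjoint_or_nested_general l n i j i' j' h h'
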